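/- Soundness of the sum-check protocol (abstract round-by-round form): Let F be a finite field of size p, let P : Fⁿ → F be given, and define for each partial assignment (a₁,...,a_{i-1}) the true polynomial Q*_i(x) = Σ_{x_{i+1},...,xₙ ∈ {0,1}} P(a₁,...,a_{i-1}, x, x_{i+1},...,xₙ). Suppose each Q*_i is a univariate polynomial of degree at most d. If Σ_{x ∈ {0,1}ⁿ} P(x) ≠ v for the claimed value v, then for any (possibly adversarial) Prover strategy sending degree-≤d polynomials Q₁,...,Qₙ, the probability over uniformly random a₁,...,aₙ ∈ F that all Verifier checks pass (Q₁(0)+Q₁(1) = v, Q_i(0)+Q_i(1) = Q_{i-1}(a_{i-1}) for 1 < i ≤ n, and Qₙ(aₙ) = P(a₁,...,aₙ)) is at most n·d/p. -/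

import Mathlib

/-!
Write `R_i(a)` for the sum of `P` over Boolean values of the coordinates `≥ i`, the others taken
from `a`; then `Q*_i(0) + Q*_i(1) = R_i(a)` and `Q*_i(a_i) = R_{i+1}(a)`. If the claim a round
starts from is false (initially `v ≠ R_0`) then `Q_i ≠ Q*_i`, and unless the two agree at the
challenge `a_i`, the claim `Q_i(a_i)` handed to the next round is false again; the last claim is
compared with `P(a) = R_n(a)` itself. So on every accepted `a` some round is lucky. Once the
coordinates other than `a_i` are fixed, `Q_i - Q*_i` is a fixed nonzero polynomial of degree
`≤ d`, so at most `d · p^(n-1)` points are lucky in round `i`, and a union bound over the `n`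
rounds finishes the proof.
-/

open Polynomial Finset

namespace SumCheck

section PartialSums

variable {R : Type*} [AddCommMonoidWithOne R] {n : ℕ}

def partialSum (P : (Fin n → R) → R) (i : ℕ) (a : Fin n → R) : R :=
  ∑ s : {j : Fin n // i ≤ (j : ℕ)} → Bool,
    P fun j => if h : i ≤ (j : ℕ) then (if s ⟨j, h⟩ then 1 else 0) else a j

def roundSum (P : (Fin n → R) → R) (i : Fin n) (a : Fin n → R) (x : R) : R :=
  ∑ s : {j : Fin n // i < j} → Bool,
    P fun j => if h : i < j then (if s ⟨j, h⟩ then 1 else 0) else if j = i then x else a j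

def boolSplitAt (i : Fin n) :
    ({j : Fin n // (i : ℕ) ≤ j} → Bool) ≃ Bool × ({j : Fin n // i < j} → Bool) where
  toFun s := (s ⟨i, le_rfl⟩, fun j => s ⟨j, j.2.le⟩)
  invFun bs j := if h : i < j.1 then bs.2 ⟨j, h⟩ else bs.1
  left_inv s := by
    funext j
    have : ¬ i < j.1 → j = ⟨i, le_rfl⟩ := fun h =>
      Subtype.ext (Fin.ext (le_antisymm (not_lt.1 h) j.2))
    grind
  right_inv bs := by
    ext j
    · simp
    · simp [j.2]

theorem partialSum_zero (P : (Fin n → R) → R) (a : Fin n → R) :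
    partialSum P 0 a = ∑ s : Fin n → Bool, P fun j => if s j then 1 else 0 :=
  Fintype.sum_equiv ((Equiv.subtypeUnivEquiv fun _ => Nat.zero_le _).arrowCongr (.refl _)) _ _
    fun _ => rfl

theorem partialSum_self (P : (Fin n → R) → R) (a : Fin n → R) : partialSum P n a = P a := by
  have h : ∀ j : Fin n, ¬ n ≤ (j : ℕ) := fun j => not_le.2 j.2
  have : IsEmpty {j : Fin n // n ≤ (j : ℕ)} := ⟨fun j => h j j.2⟩
  simp [partialSum, h]

theorem roundSum_apply_self (P : (Fin n → R) → R) (i : Fin n) (a : Fin n → R) :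
    roundSum P i a (a i) = partialSum P (i + 1) a :=
  Fintype.sum_equiv ((Equiv.subtypeEquivRight fun _ => Iff.rfl).arrowCongr (.refl _)) _ _
    fun s => congrArg P <| funext fun j => by
      by_cases h : i < j
      · rw [dif_pos h, dif_pos (show (i : ℕ) + 1 ≤ j from h)]
        rfl
      · rw [dif_neg h, dif_neg (show ¬ (i : ℕ) + 1 ≤ j from h)]
        exact ite_eq_right_iff.2 fun hji => hji ▸ rfl

theorem roundSum_zero_add_roundSum_one (P : (Fin n → R) → R) (i : Fin n) (a : Fin n → R) :
    roundSum P i a 0 + roundSum P i a 1 = partialSum P i a := by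
  rw [partialSum, ← (boolSplitAt i).symm.sum_comp, Fintype.sum_prod_type, Fintype.sum_bool,
    add_comm]
  congr 1 <;> refine Finset.sum_congr rfl fun s _ => congrArg P <| funext fun j => ?_
  all_goals
    simp only [boolSplitAt, Equiv.coe_fn_symm_mk]
    grind

theorem roundSum_congr (P : (Fin n → R) → R) (i : Fin n) {a a' : Fin n → R}
    (h : ∀ j < i, a j = a' j) (x : R) : roundSum P i a x = roundSum P i a' x :=
  Finset.sum_congr rfl fun s _ => congrArg P <| funext fun j => by grind

end PartialSums

theorem exists_round_ne_of_accept {R : Type*} [AddMonoidWithOne R] {n : ℕ} (hn : 0 < n)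
    (v : R) (truth : ℕ → R) (q honest : Fin n → R → R) (r : Fin n → R)
    (honest_sum : ∀ i, honest i 0 + honest i 1 = truth i)
    (honest_apply : ∀ i, honest i (r i) = truth (i + 1))
    (hcheck : ∀ i : Fin n, q i 0 + q i 1 =
      if _ : 0 < (i : ℕ) then
        q ⟨i - 1, (Nat.sub_le _ _).trans_lt i.2⟩ (r ⟨i - 1, (Nat.sub_le _ _).trans_lt i.2⟩)
      else v)
    (hfinal : q ⟨n - 1, Nat.sub_one_lt_of_lt hn⟩ (r ⟨n - 1, Nat.sub_one_lt_of_lt hn⟩) = truth n)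
    (hv : truth 0 ≠ v) :
    ∃ i, q i ≠ honest i ∧ q i (r i) = honest i (r i) := by
  by_contra! hlucky
  have step (i : Fin n) (hi : q i 0 + q i 1 ≠ truth i) : q i (r i) ≠ truth (i + 1) := by
    rw [← honest_apply]
    exact hlucky i fun h => hi (h ▸ honest_sum i)
  have hfalse : ∀ k (hk : k < n), q ⟨k, hk⟩ 0 + q ⟨k, hk⟩ 1 ≠ truth k := by
    intro k
    induction k with
    | zero => intro hk; simpa [hcheck] using hv.symm
    | succ k ih =>
      intro hk
      simpa [hcheck] using step ⟨k, by omega⟩ (ih (by omega))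
  exact step ⟨n - 1, by omega⟩ (hfalse _ _) (by simpa [Nat.sub_add_cancel hn] using hfinal)

section Counting

variable {ι F : Type*} [DecidableEq ι] [CommRing F] [IsDomain F] [DecidableEq F]

theorem card_le_natDegree_of_eval_apply_eq_zero {q : F[X]} (hq : q ≠ 0) (i : ι)
    {s : Finset (ι → F)} (hs : ∀ a ∈ s, ∀ b ∈ s, ∀ j ≠ i, a j = b j)
    (hroot : ∀ a ∈ s, q.eval (a i) = 0) : #s ≤ q.natDegree :=
  calc #s ≤ #q.roots.toFinset := by
        refine card_le_card_of_injOn (· i) (fun a ha => ?_) fun a ha b hb hab => ?_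
        · simpa [hq] using hroot a ha
        · funext j
          by_cases hj : j = i
          · exact hj ▸ hab
          · exact hs a ha b hb j hj
    _ ≤ q.natDegree := (Multiset.toFinset_card_le _).trans q.card_roots'

/-- In round `i` of the protocol `D a = Q_i - Q*_i`, and the prover escapes detection in that
round when this difference is a nonzero function vanishing at the verifier's challenge `a i`. -/
def IsLuckyAt (D : (ι → F) → F[X]) (i : ι) (a : ι → F) : Prop :=
  (∃ x, (D a).eval x ≠ 0) ∧ (D a).eval (a i) = 0

variable [Fintype F]

instance (D : (ι → F) → F[X]) (i : ι) : DecidablePred (IsLuckyAt D i) :=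
  fun _ => by unfold IsLuckyAt; infer_instance

variable [Fintype ι]

/- Only the evaluation map of `D a` is assumed independent of `a i`: the honest polynomial `Q*_i`
is pinned down by its values only when `d < #F`. -/
theorem card_filter_isLuckyAt_le (i : ι) (D : (ι → F) → F[X]) {d : ℕ}
    (hdeg : ∀ a, (D a).natDegree ≤ d)
    (hD : ∀ a b, (∀ j ≠ i, a j = b j) → ∀ x, (D a).eval x = (D b).eval x) :
    #{a | IsLuckyAt D i a} ≤ d * Fintype.card F ^ (Fintype.card ι - 1) := by
  set lucky : Finset (ι → F) := {a | IsLuckyAt D i a}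
  let rest (a : ι → F) : {j // j ≠ i} → F := (Equiv.funSplitAt i F a).2
  calc #lucky ≤ d * #(univ : Finset ({j // j ≠ i} → F)) := by
        refine card_le_mul_card_image_of_maps_to (f := rest) (fun _ _ => mem_univ _) d ?_
        intro b _
        rcases (lucky.filter (rest · = b)).eq_empty_or_nonempty with hempty | ⟨a₀, ha₀⟩
        · simp [hempty]
        obtain ⟨ha₀lucky, rfl⟩ := mem_filter.1 ha₀
        have hfiber : ∀ a ∈ lucky.filter (rest · = rest a₀), ∀ j ≠ i, a j = a₀ j :=
          fun a ha j hj => congrFun (mem_filter.1 ha).2 ⟨j, hj⟩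
        have hD₀ : D a₀ ≠ 0 := by
          obtain ⟨x, hx⟩ := (mem_filter.1 ha₀lucky).2.1
          exact fun h => hx (by simp [h])
        refine (card_le_natDegree_of_eval_apply_eq_zero hD₀ i (fun a ha b hb j hj => ?_)
          fun a ha => ?_).trans (hdeg a₀)
        · rw [hfiber a ha j hj, hfiber b hb j hj]
        · rw [← hD a a₀ (hfiber a ha)]
          exact (mem_filter.1 (mem_filter.1 ha).1).2.2
    _ = d * Fintype.card F ^ (Fintype.card ι - 1) := by simp

theorem card_le_of_forall_exists_isLuckyAt (D : ι → (ι → F) → F[X]) {d : ℕ}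
    (hdeg : ∀ i a, (D i a).natDegree ≤ d)
    (hD : ∀ i a b, (∀ j ≠ i, a j = b j) → ∀ x, (D i a).eval x = (D i b).eval x)
    (s : Finset (ι → F)) (hs : ∀ a ∈ s, ∃ i, IsLuckyAt (D i) i a) :
    #s ≤ Fintype.card ι * (d * Fintype.card F ^ (Fintype.card ι - 1)) :=
  calc #s ≤ #(univ.biUnion fun i => ({a | IsLuckyAt (D i) i a} : Finset (ι → F))) :=
        card_le_card fun a ha => by simpa using hs a ha
    _ ≤ _ := card_biUnion_le_card_mul _ _ _ fun i _ =>
        card_filter_isLuckyAt_le i (D i) (hdeg i) (hD i)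

end Counting

theorem div_pow_le_div_of_le_mul_pow_pred {K : Type*} [Field K] [LinearOrder K]
    [IsStrictOrderedRing K] {m c p n : ℕ} (hn : 0 < n) (hp : 0 < p) (h : m ≤ c * p ^ (n - 1)) :
    (m : K) / p ^ n ≤ c / p := by
  have hp' : (0 : K) < p := by exact_mod_cast hp
  rw [div_le_div_iff₀ (pow_pos hp' n) hp', ← Nat.sub_add_cancel hn, pow_succ, ← mul_assoc]
  gcongr
  exact_mod_cast h

end SumCheck

open SumCheck

/-- Soundness of the sum-check protocol, abstract round-by-round form.

`P : Fⁿ → F` is given, and `Qstar i a` is the honest round-`i` polynomial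
`Q*_i(x) = Σ_{x_{i+1},…,xₙ ∈ {0,1}} P(a₁,…,a_{i-1},x,x_{i+1},…,xₙ)`, assumed to have
degree at most `d`.  If the claimed value `v` is wrong, then for any prover strategy
`Q` sending degree-`≤ d` polynomials, the probability over uniform `a ∈ Fⁿ` that all
verifier checks pass is at most `n·d/p`. -/
theorem sumcheck_soundness {F : Type} [Field F] [Fintype F]
    (n d : ℕ) (hn : 0 < n)
    (P : (Fin n → F) → F) (v : F)
    (Qstar Q : Fin n → (Fin n → F) → Polynomial F)
    (hQstar_eval : ∀ (i : Fin n) (a : Fin n → F) (x : F),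
      (Qstar i a).eval x =
        ∑ s : ({j : Fin n // i < j} → Bool),
          P (fun j => if h : i < j then (if s ⟨j, h⟩ then 1 else 0)
                      else if j = i then x else a j))
    (hQstar_deg : ∀ (i : Fin n) (a : Fin n → F), (Qstar i a).degree ≤ d)
    (hQ_deg : ∀ (i : Fin n) (a : Fin n → F), (Q i a).degree ≤ d)
    (hQ_prefix : ∀ (i : Fin n) (a a' : Fin n → F),
      (∀ j : Fin n, j < i → a j = a' j) → Q i a = Q i a')
    (hsum : (∑ s : Fin n → Bool, P (fun j => if s j then 1 else 0)) ≠ v) :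
    (Nat.card {a : Fin n → F |
        (∀ i : Fin n, (Q i a).eval 0 + (Q i a).eval 1 =
          if h : 0 < (i : ℕ) then
            (Q ⟨(i : ℕ) - 1, by have := i.isLt; omega⟩ a).eval
              (a ⟨(i : ℕ) - 1, by have := i.isLt; omega⟩)
          else v) ∧
        (Q ⟨n - 1, by omega⟩ a).eval (a ⟨n - 1, by omega⟩) = P a} : ℚ)
      / (Fintype.card F : ℚ) ^ n ≤ (n * d : ℚ) / (Fintype.card F : ℚ) := by
  classical
  have hQstar : ∀ i a x, (Qstar i a).eval x = roundSum P i a x := hQstar_eval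
  refine (div_pow_le_div_of_le_mul_pow_pred (c := n * d) hn Fintype.card_pos ?_).trans_eq
    (by push_cast; rfl)
  rw [Nat.card_eq_card_toFinset]
  refine (card_le_of_forall_exists_isLuckyAt (fun i a => Q i a - Qstar i a) (d := d)
    (fun i a => ?_) (fun i a b hab x => ?_) _ fun a ha => ?_).trans_eq (by simp [mul_assoc])
  · simpa using natDegree_sub_le_of_le (natDegree_le_of_degree_le (hQ_deg i a))
      (natDegree_le_of_degree_le (hQstar_deg i a))
  · have hprefix : ∀ j < i, a j = b j := fun j hj => hab j hj.ne
    simp only [eval_sub, hQ_prefix i a b hprefix, hQstar, roundSum_congr P i hprefix]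
  · obtain ⟨hcheck, hfinal⟩ := Set.mem_toFinset.1 ha
    obtain ⟨i, hne, heq⟩ := exists_round_ne_of_accept hn v (partialSum P · a)
      (fun i x => (Q i a).eval x) (fun i x => (Qstar i a).eval x) a
      (fun i => by simpa only [hQstar] using roundSum_zero_add_roundSum_one P i a)
      (fun i => by simpa only [hQstar] using roundSum_apply_self P i a)
      hcheck (hfinal.trans (partialSum_self P a).symm) ((partialSum_zero P a).trans_ne hsum)
    exact ⟨i, by simpa [sub_eq_zero, funext_iff] using hne, by simp [heq]⟩
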